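/- arXiv:2205.04137 — 2 statements merged into one kernel-verified Lean document; each statement's English description precedes it below -/
import Mathlib

section
/- For every x ∈ (0,1] with x ≠ a, the derivative of H̄ at x equals -(1-a)(x - a·ln x - μ)/((x-a)² · ln a), and this derivative is strictly positive. -/
/-!
Away from `0` and `a`, `H̄` is the constant `-(1 - a) / ln a > 0` times `y ↦ y (ln y - ln a) / (y - a)`,
whose derivative is `(x - a - a (ln x - ln a)) / (x - a)²`. With `μ = a (1 - ln a)` this numerator is
`x - a ln x - μ`, and it is positive because `ln t < t - 1` for `t = x / a ≠ 1`.
-/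

open Real Filter Topology

lemma mul_log_sub_log_lt_sub {a x : ℝ} (ha : 0 < a) (hx : 0 < x) (hxa : x ≠ a) :
    a * (log x - log a) < x - a := by
  have hlog : log (x / a) < x / a - 1 :=
    log_lt_sub_one_of_pos (div_pos hx ha) (by rwa [Ne, div_eq_one_iff_eq ha.ne'])
  rw [log_div hx.ne' ha.ne'] at hlog
  calc a * (log x - log a) < a * (x / a - 1) := mul_lt_mul_of_pos_left hlog ha
    _ = x - a := by field_simp

lemma hasDerivAt_mul_log_sub_log_div_sub {a x : ℝ} (hx : x ≠ 0) (hxa : x ≠ a) :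
    HasDerivAt (fun y => y * (log y - log a) / (y - a))
      ((x - a - a * (log x - log a)) / (x - a) ^ 2) x := by
  have hnum : HasDerivAt (fun y => y * (log y - log a)) (log x - log a + 1) x := by
    refine ((hasDerivAt_id' x).mul ((hasDerivAt_log hx).sub_const (log a))).congr_deriv ?_
    field_simp
  refine (hnum.div ((hasDerivAt_id' x).sub_const a) (sub_ne_zero.2 hxa)).congr_deriv ?_
  ring

theorem Hbar_hasDerivAt_general (μ a : ℝ)
    (ha : a ∈ Set.Ioo (0:ℝ) 1) (haμ : a * (1 - Real.log a) = μ)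
    (H : ℝ → ℝ)
    (hH : ∀ x : ℝ, H x =
      if x = 0 then 0
      else if x = a then -(1 - a) / Real.log a
      else -(x * (1 - a) * (Real.log x - Real.log a)) / ((x - a) * Real.log a)) :
    ∀ x ∈ Set.Ioc (0:ℝ) 1, x ≠ a →
      HasDerivAt H
        (-((1 - a) * (x - a * Real.log x - μ)) / ((x - a) ^ 2 * Real.log a)) x ∧
      0 < -((1 - a) * (x - a * Real.log x - μ)) / ((x - a) ^ 2 * Real.log a) := by
  rintro x ⟨hx0, -⟩ hxa
  obtain ⟨ha0, ha1⟩ := ha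
  subst haμ
  have hla : log a < 0 := log_neg ha0 ha1
  have hxa' : x - a ≠ 0 := sub_ne_zero.2 hxa
  have hH_near : H =ᶠ[𝓝 x] fun y => -(1 - a) / log a * (y * (log y - log a) / (y - a)) := by
    filter_upwards [eventually_ne_nhds hx0.ne', eventually_ne_nhds hxa] with y hy0 hya
    have hya' : y - a ≠ 0 := sub_ne_zero.2 hya
    rw [hH y, if_neg hy0, if_neg hya]
    field_simp
  have hvalue : -((1 - a) * (x - a * log x - a * (1 - log a))) / ((x - a) ^ 2 * log a) =
      -(1 - a) / log a * ((x - a - a * (log x - log a)) / (x - a) ^ 2) := by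
    field_simp
    ring
  rw [hvalue]
  refine ⟨((hasDerivAt_mul_log_sub_log_div_sub hx0.ne' hxa).const_mul _).congr_of_eventuallyEq
    hH_near, mul_pos (div_pos_of_neg_of_neg (by linarith) hla) (div_pos ?_ ?_)⟩
  · linarith [mul_log_sub_log_lt_sub ha0 hx0 hxa]
  · positivity

/-- For x ∈ (0,1], x ≠ a, the derivative of H̄ at x equals
-(1-a)(x - a·ln x - μ)/((x-a)²·ln a), and it is strictly positive. -/
theorem Hbar_hasDerivAt (μ a : ℝ) (hμ : μ ∈ Set.Ioo (0:ℝ) 1)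
    (ha : a ∈ Set.Ioo (0:ℝ) 1) (haμ : a * (1 - Real.log a) = μ)
    (H : ℝ → ℝ)
    (hH : ∀ x : ℝ, H x =
      if x = 0 then 0
      else if x = a then -(1 - a) / Real.log a
      else -(x * (1 - a) * (Real.log x - Real.log a)) / ((x - a) * Real.log a)) :
    ∀ x ∈ Set.Ioc (0:ℝ) 1, x ≠ a →
      HasDerivAt H
        (-((1 - a) * (x - a * Real.log x - μ)) / ((x - a) ^ 2 * Real.log a)) x ∧
      0 < -((1 - a) * (x - a * Real.log x - μ)) / ((x - a) ^ 2 * Real.log a) :=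
  Hbar_hasDerivAt_general μ a ha haμ H hH
end

section
/- Fix λ = -2(1-a)/ln(a). For each x ∈ (a,1), the quadratic function g ↦ (H̄(x) - x·H̄'(x))·g² - 2(H̄(x) + (1-a)/ln a)·g + H̄(x) + x·H̄'(x) + 2(1-a)/ln a over g ∈ [0,1] is uniquely minimized at g = 1 - a/x. -/
/-!
The coefficient of `g` is `-2 A c` with `A = H̄(x) - x H̄'(x)` and `c = 1 - a/x`, so the quadratic
is `A (g - c)² + const`. Its leading coefficient `A` is positive because
`x (ln x - ln a) > x - a` for `x > 0`, `x ≠ a` (i.e. `ln (a/x) < a/x - 1`) and `ln a < 0`.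
-/

open Real

noncomputable section

def Hbar (a x : ℝ) : ℝ :=
  -(x * (1 - a) * (log x - log a)) / ((x - a) * log a)

/-- The paper's closed form of `H̄'`; it is the derivative of `Hbar a` when `μ = a (1 - ln a)`. -/
def HbarDeriv (a μ x : ℝ) : ℝ :=
  -((1 - a) * (x - a * log x - μ)) / ((x - a) ^ 2 * log a)

theorem sub_lt_mul_log_sub_log {a x : ℝ} (ha : 0 < a) (hx : 0 < x) (hxa : x ≠ a) :
    x - a < x * (log x - log a) := by
  have hlog : log (a / x) < a / x - 1 :=
    log_lt_sub_one_of_pos (div_pos ha hx) (by rwa [Ne, div_eq_one_iff_eq hx.ne', eq_comm])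
  rw [log_div ha.ne' hx.ne'] at hlog
  have := mul_lt_mul_of_pos_left hlog hx
  rw [mul_sub x (a / x), mul_div_cancel₀ _ hx.ne'] at this
  linarith

theorem Hbar_sub_mul_HbarDeriv_eq {a x : ℝ} (hx : x ≠ 0) (hxa : x ≠ a) (hla : log a ≠ 0) :
    Hbar a x - x * HbarDeriv a (a * (1 - log a)) x
      = (1 - a) * x * (x * (log x - log a) - (x - a)) / (-log a * (x - a) ^ 2) := by
  have hxa' : x - a ≠ 0 := sub_ne_zero.mpr hxa
  unfold Hbar HbarDeriv
  field_simp
  ring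

theorem Hbar_sub_mul_HbarDeriv_pos {a x : ℝ} (ha : a ∈ Set.Ioo (0 : ℝ) 1) (hx : 0 < x)
    (hxa : x ≠ a) : 0 < Hbar a x - x * HbarDeriv a (a * (1 - log a)) x := by
  have hla : log a < 0 := log_neg ha.1 ha.2
  rw [Hbar_sub_mul_HbarDeriv_eq hx.ne' hxa hla.ne]
  have hD := sub_lt_mul_log_sub_log ha.1 hx hxa
  have hsq : 0 < (x - a) ^ 2 := sq_pos_of_ne_zero (sub_ne_zero.mpr hxa)
  have h1a : 0 < 1 - a := sub_pos.mpr ha.2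
  apply div_pos
  · exact mul_pos (mul_pos h1a hx) (sub_pos.mpr hD)
  · exact mul_pos (neg_pos.mpr hla) hsq

theorem Hbar_add_eq_mul_vertex {a x : ℝ} (hx : x ≠ 0) (hxa : x ≠ a) (hla : log a ≠ 0) :
    Hbar a x + (1 - a) / log a
      = (Hbar a x - x * HbarDeriv a (a * (1 - log a)) x) * (1 - a / x) := by
  have hxa' : x - a ≠ 0 := sub_ne_zero.mpr hxa
  unfold Hbar HbarDeriv
  field_simp
  ring

theorem mul_sq_sub_two_mul_lt_of_ne {A c g : ℝ} (hA : 0 < A) (hg : g ≠ c) :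
    A * c ^ 2 - 2 * (A * c) * c < A * g ^ 2 - 2 * (A * c) * g := by
  have : 0 < A * (g - c) ^ 2 := mul_pos hA (sq_pos_of_ne_zero (sub_ne_zero.mpr hg))
  linarith

end

theorem quadratic_min_above_a_general (μ a : ℝ)
    (ha : a ∈ Set.Ioo (0:ℝ) 1) (haμ : a * (1 - Real.log a) = μ)
    (H H' : ℝ → ℝ)
    (hH : ∀ x : ℝ, x ≠ 0 → x ≠ a →
      H x = -(x * (1 - a) * (Real.log x - Real.log a)) / ((x - a) * Real.log a))
    (hH' : ∀ x : ℝ, x ≠ a →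
      H' x = -((1 - a) * (x - a * Real.log x - μ)) / ((x - a) ^ 2 * Real.log a)) :
    ∀ x ∈ Set.Ioo a 1, ∀ g ∈ Set.Icc (0:ℝ) 1, g ≠ 1 - a / x →
      (H x - x * H' x) * (1 - a / x) ^ 2
          - 2 * (H x + (1 - a) / Real.log a) * (1 - a / x)
          + H x + x * H' x + 2 * (1 - a) / Real.log a
        < (H x - x * H' x) * g ^ 2
          - 2 * (H x + (1 - a) / Real.log a) * g
          + H x + x * H' x + 2 * (1 - a) / Real.log a := by
  intro x hx g _ hg
  subst haμ
  have hx0 : 0 < x := ha.1.trans hx.1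
  have hxa : x ≠ a := hx.1.ne'
  have hHx : H x = Hbar a x := hH x hx0.ne' hxa
  have hH'x : H' x = HbarDeriv a (a * (1 - log a)) x := hH' x hxa
  rw [hHx, hH'x, Hbar_add_eq_mul_vertex hx0.ne' hxa (log_neg ha.1 ha.2).ne]
  have := mul_sq_sub_two_mul_lt_of_ne (Hbar_sub_mul_HbarDeriv_pos ha hx0 hxa) hg
  linarith

/-- With λ = -2(1-a)/ln a, for each x ∈ (a,1) the quadratic
g ↦ (H̄(x) - x·H̄'(x))·g² - 2(H̄(x) + (1-a)/ln a)·g + H̄(x) + x·H̄'(x) + 2(1-a)/ln a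
over g ∈ [0,1] is uniquely minimized at g = 1 - a/x. -/
theorem quadratic_min_above_a (μ a : ℝ) (hμ : μ ∈ Set.Ioo (0:ℝ) 1)
    (ha : a ∈ Set.Ioo (0:ℝ) 1) (haμ : a * (1 - Real.log a) = μ)
    (H H' : ℝ → ℝ)
    (hH : ∀ x : ℝ, x ≠ 0 → x ≠ a →
      H x = -(x * (1 - a) * (Real.log x - Real.log a)) / ((x - a) * Real.log a))
    (hH' : ∀ x : ℝ, x ≠ a →
      H' x = -((1 - a) * (x - a * Real.log x - μ)) / ((x - a) ^ 2 * Real.log a)) :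
    ∀ x ∈ Set.Ioo a 1, ∀ g ∈ Set.Icc (0:ℝ) 1, g ≠ 1 - a / x →
      (H x - x * H' x) * (1 - a / x) ^ 2
          - 2 * (H x + (1 - a) / Real.log a) * (1 - a / x)
          + H x + x * H' x + 2 * (1 - a) / Real.log a
        < (H x - x * H' x) * g ^ 2
          - 2 * (H x + (1 - a) / Real.log a) * g
          + H x + x * H' x + 2 * (1 - a) / Real.log a :=
  quadratic_min_above_a_general μ a ha haμ H H' hH hH'
end
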